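/- Let (X, μ), (Y, ν), (Z, ρ) be σ-finite measure spaces, let k₁ ∈ L²(X × Y, μ × ν) and k₂ ∈ L²(Y × Z, ν × ρ), and let T₁ : L²(X, μ) → L²(Y, ν) and T₂ : L²(Y, ν) → L²(Z, ρ) be the corresponding integral operators. Then the function k(x, z) = ∫_Y k₁(x, y) k₂(y, z) dν(y) is defined (μ × ρ)-almost everywhere, belongs to L²(X × Z, μ × ρ) with ‖k‖_{L²(μ×ρ)} ≤ ‖k₁‖_{L²(μ×ν)} · ‖k₂‖_{L²(ν×ρ)}, and the integral operator T_k with kernel k equals the composition T₂ ∘ T₁. -/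

import Mathlib

/-!
By Cauchy–Schwarz in `y`, `|k(x, z)|² ≤ ‖k₁(x, ·)‖₂² ‖k₂(·, z)‖₂²`, and integrating this over
`μ × ρ` with Tonelli gives `‖k‖₂ ≤ ‖k₁‖₂ ‖k₂‖₂`. For the composition, `T₂ (T₁ f) (z)` is an
iterated integral of `k₂(y, z) k₁(x, y) f(x)` over `ν × μ`; for a.e. `z` this is the product of the
two `L²` functions `k₁ ∘ swap` and `k₂(·, z) ⊗ f`, hence integrable, so Fubini swaps the order.
-/

open MeasureTheory Filter
open scoped ENNReal

namespace MeasureTheory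

variable {α β γ : Type*} [MeasurableSpace α] [MeasurableSpace β] [MeasurableSpace γ]
  {μ : Measure α} {ν : Measure β} {ρ : Measure γ}

section Sections

variable {E : Type*} [NormedAddCommGroup E] {f : α × β → E}

lemma eLpNorm_two_sq_eq_lintegral (g : α → E) : eLpNorm g 2 μ ^ 2 = ∫⁻ x, ‖g x‖ₑ ^ 2 ∂μ := by
  rw [eLpNorm_eq_lintegral_rpow_enorm_toReal two_ne_zero ENNReal.ofNat_ne_top,
    ← ENNReal.rpow_natCast, ← ENNReal.rpow_mul]
  norm_num

lemma lintegral_eLpNorm_prodMk_left_sq [SFinite ν] (hf : AEStronglyMeasurable f (μ.prod ν)) :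
    ∫⁻ x, eLpNorm (fun y => f (x, y)) 2 ν ^ 2 ∂μ = eLpNorm f 2 (μ.prod ν) ^ 2 := by
  simp_rw [eLpNorm_two_sq_eq_lintegral]
  exact (lintegral_prod _ (hf.enorm.pow_const 2)).symm

lemma AEStronglyMeasurable.aemeasurable_eLpNorm_prodMk_left_sq [SFinite ν]
    (hf : AEStronglyMeasurable f (μ.prod ν)) :
    AEMeasurable (fun x => eLpNorm (fun y => f (x, y)) 2 ν ^ 2) μ := by
  simp_rw [eLpNorm_two_sq_eq_lintegral]
  exact (hf.enorm.pow_const 2).lintegral_prod_right'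

lemma MemLp.ae_prodMk_left [SFinite μ] [SFinite ν] (hf : MemLp f 2 (μ.prod ν)) :
    ∀ᵐ x ∂μ, MemLp (fun y => f (x, y)) 2 ν := by
  have hsq := (memLp_two_iff_integrable_sq_norm hf.1).mp hf
  filter_upwards [hf.1.prodMk_left, hsq.prod_right_ae] with x hx hsqx
  exact (memLp_two_iff_integrable_sq_norm hx).mpr hsqx

lemma MemLp.ae_prodMk_right [SFinite μ] [SFinite ν] (hf : MemLp f 2 (μ.prod ν)) :
    ∀ᵐ y ∂ν, MemLp (fun x => f (x, y)) 2 μ :=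
  (hf.comp_measurePreserving Measure.measurePreserving_swap).ae_prodMk_left

end Sections

lemma MemLp.mul_prod [SFinite μ] [SFinite ν] {u : α → ℝ} {v : β → ℝ} (hu : MemLp u 2 μ)
    (hv : MemLp v 2 ν) : MemLp (fun q : α × β => u q.1 * v q.2) 2 (μ.prod ν) := by
  have hm : AEStronglyMeasurable (fun q : α × β => u q.1 * v q.2) (μ.prod ν) :=
    (hu.1.comp_quasiMeasurePreserving Measure.quasiMeasurePreserving_fst).mul
      (hv.1.comp_quasiMeasurePreserving Measure.quasiMeasurePreserving_snd)
  rw [memLp_two_iff_integrable_sq hm]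
  exact (hu.integrable_sq.mul_prod hv.integrable_sq).congr (.of_forall fun q => by simp [mul_pow])

lemma enorm_integral_mul_le_eLpNorm_mul_eLpNorm {u v : α → ℝ} (hu : AEStronglyMeasurable u μ)
    (hv : AEStronglyMeasurable v μ) :
    ‖∫ x, u x * v x ∂μ‖ₑ ≤ eLpNorm u 2 μ * eLpNorm v 2 μ :=
  calc ‖∫ x, u x * v x ∂μ‖ₑ ≤ ∫⁻ x, ‖u x * v x‖ₑ ∂μ := enorm_integral_le_lintegral_enorm _
    _ = eLpNorm (u • v) 1 μ := eLpNorm_one_eq_lintegral_enorm.symm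
    _ ≤ eLpNorm u 2 μ * eLpNorm v 2 μ := eLpNorm_smul_le_mul_eLpNorm hv hu

noncomputable def kernelComp (k₁ : α × β → ℝ) (k₂ : β × γ → ℝ) (ν : Measure β) (p : α × γ) : ℝ :=
  ∫ y, k₁ (p.1, y) * k₂ (y, p.2) ∂ν

variable {k₁ : α × β → ℝ} {k₂ : β × γ → ℝ}

lemma AEStronglyMeasurable.kernelComp [SFinite μ] [SFinite ν] [SFinite ρ]
    (hk₁ : AEStronglyMeasurable k₁ (μ.prod ν)) (hk₂ : AEStronglyMeasurable k₂ (ν.prod ρ)) :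
    AEStronglyMeasurable (kernelComp k₁ k₂ ν) (μ.prod ρ) := by
  have h₁ : AEStronglyMeasurable (fun q : (α × γ) × β => k₁ (q.1.1, q.2)) ((μ.prod ρ).prod ν) :=
    hk₁.comp_quasiMeasurePreserving
      (QuasiMeasurePreserving.prodMap Measure.quasiMeasurePreserving_fst (.id ν))
  have h₂ : AEStronglyMeasurable (fun q : (α × γ) × β => k₂ (q.2, q.1.2)) ((μ.prod ρ).prod ν) :=
    hk₂.prod_swap.comp_quasiMeasurePreserving
      (QuasiMeasurePreserving.prodMap Measure.quasiMeasurePreserving_snd (.id ν))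
  exact (h₁.mul h₂).integral_prod_right'

lemma eLpNorm_kernelComp_le [SFinite ν] [SFinite ρ] (hk₁ : AEStronglyMeasurable k₁ (μ.prod ν))
    (hk₂ : AEStronglyMeasurable k₂ (ν.prod ρ)) :
    eLpNorm (kernelComp k₁ k₂ ν) 2 (μ.prod ρ) ≤
      eLpNorm k₁ 2 (μ.prod ν) * eLpNorm k₂ 2 (ν.prod ρ) := by
  set k₂' : γ × β → ℝ := fun q => k₂ q.swap
  have hk₂' : AEStronglyMeasurable k₂' (ρ.prod ν) := hk₂.prod_swap
  have hnorm₂ : eLpNorm k₂' 2 (ρ.prod ν) = eLpNorm k₂ 2 (ν.prod ρ) :=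
    eLpNorm_comp_measurePreserving hk₂ Measure.measurePreserving_swap
  set a := fun x => eLpNorm (fun y => k₁ (x, y)) 2 ν
  set b := fun z => eLpNorm (fun y => k₂' (z, y)) 2 ν
  have hCS : ∀ᵐ p ∂μ.prod ρ, ‖kernelComp k₁ k₂ ν p‖ₑ ^ 2 ≤ a p.1 ^ 2 * b p.2 ^ 2 := by
    filter_upwards [Measure.quasiMeasurePreserving_fst.ae hk₁.prodMk_left,
      Measure.quasiMeasurePreserving_snd.ae hk₂'.prodMk_left] with p h₁ h₂
    rw [← mul_pow]
    exact pow_le_pow_left' (enorm_integral_mul_le_eLpNorm_mul_eLpNorm h₁ h₂) 2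
  rw [← ENNReal.pow_le_pow_left_iff two_ne_zero, mul_pow, eLpNorm_two_sq_eq_lintegral,
    ← lintegral_eLpNorm_prodMk_left_sq hk₁, ← hnorm₂, ← lintegral_eLpNorm_prodMk_left_sq hk₂',
    ← lintegral_prod_mul hk₁.aemeasurable_eLpNorm_prodMk_left_sq
      hk₂'.aemeasurable_eLpNorm_prodMk_left_sq]
  exact lintegral_mono_ae hCS

lemma MemLp.kernelComp [SFinite μ] [SFinite ν] [SFinite ρ] (hk₁ : MemLp k₁ 2 (μ.prod ν))
    (hk₂ : MemLp k₂ 2 (ν.prod ρ)) :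
    MemLp (kernelComp k₁ k₂ ν) 2 (μ.prod ρ) :=
  ⟨hk₁.1.kernelComp hk₂.1,
    (eLpNorm_kernelComp_le hk₁.1 hk₂.1).trans_lt (ENNReal.mul_lt_top hk₁.2 hk₂.2)⟩

lemma integral_mul_integral_kernel_swap [SFinite μ] [SFinite ν] {k : α × β → ℝ}
    (hk : MemLp k 2 (μ.prod ν)) {f : α → ℝ} (hf : MemLp f 2 μ) {g : β → ℝ} (hg : MemLp g 2 ν) :
    ∫ y, g y * ∫ x, k (x, y) * f x ∂μ ∂ν = ∫ x, (∫ y, k (x, y) * g y ∂ν) * f x ∂μ := by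
  have hint : Integrable (fun q : β × α => g q.1 * (k (q.2, q.1) * f q.2)) (ν.prod μ) := by
    refine ((hk.comp_measurePreserving Measure.measurePreserving_swap).integrable_mul
      (hg.mul_prod hf)).congr (.of_forall fun q => ?_)
    simp only [Pi.mul_apply, Function.comp_apply, Prod.swap]
    ring
  calc ∫ y, g y * ∫ x, k (x, y) * f x ∂μ ∂ν
      = ∫ y, ∫ x, g y * (k (x, y) * f x) ∂μ ∂ν := by simp_rw [integral_const_mul]
    _ = ∫ x, ∫ y, g y * (k (x, y) * f x) ∂ν ∂μ := integral_integral_swap hint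
    _ = ∫ x, (∫ y, k (x, y) * g y ∂ν) * f x ∂μ := by
      simp_rw [← integral_mul_const, mul_left_comm (g _), mul_assoc]

end MeasureTheory

/-- Composition of Hilbert–Schmidt integral operators: if `k₁ ∈ L²(X×Y)`, `k₂ ∈ L²(Y×Z)`
with corresponding integral operators `T₁ : L²(X) → L²(Y)` and `T₂ : L²(Y) → L²(Z)`, then
the convolution kernel `k(x,z) = ∫_Y k₁(x,y) k₂(y,z) dν(y)` is defined (μ×ρ)-a.e.,
belongs to `L²(X×Z, μ×ρ)` with `‖k‖₂ ≤ ‖k₁‖₂ ‖k₂‖₂`, and the integral operator with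
kernel `k` equals the composition `T₂ ∘ T₁`. -/
theorem composition_of_integral_operators {X Y Z : Type*}
    [MeasurableSpace X] [MeasurableSpace Y] [MeasurableSpace Z]
    (μ : Measure X) (ν : Measure Y) (ρ : Measure Z)
    [SigmaFinite μ] [SigmaFinite ν] [SigmaFinite ρ]
    (k₁ : X × Y → ℝ) (hk₁ : MemLp k₁ 2 (μ.prod ν))
    (k₂ : Y × Z → ℝ) (hk₂ : MemLp k₂ 2 (ν.prod ρ))
    (T₁ : Lp ℝ 2 μ →L[ℝ] Lp ℝ 2 ν)
    (hT₁ : ∀ f : Lp ℝ 2 μ,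
      (T₁ f : Y → ℝ) =ᵐ[ν] fun y => ∫ x, k₁ (x, y) * f x ∂μ)
    (T₂ : Lp ℝ 2 ν →L[ℝ] Lp ℝ 2 ρ)
    (hT₂ : ∀ g : Lp ℝ 2 ν,
      (T₂ g : Z → ℝ) =ᵐ[ρ] fun z => ∫ y, k₂ (y, z) * g y ∂ν) :
    (∀ᵐ p ∂(μ.prod ρ), Integrable (fun y => k₁ (p.1, y) * k₂ (y, p.2)) ν) ∧
    MemLp (fun p : X × Z => ∫ y, k₁ (p.1, y) * k₂ (y, p.2) ∂ν) 2 (μ.prod ρ) ∧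
    eLpNorm (fun p : X × Z => ∫ y, k₁ (p.1, y) * k₂ (y, p.2) ∂ν) 2 (μ.prod ρ)
      ≤ eLpNorm k₁ 2 (μ.prod ν) * eLpNorm k₂ 2 (ν.prod ρ) ∧
    (∀ f : Lp ℝ 2 μ,
      (T₂ (T₁ f) : Z → ℝ) =ᵐ[ρ]
        fun z => ∫ x, (∫ y, k₁ (x, y) * k₂ (y, z) ∂ν) * f x ∂μ) := by
  have hsec₁ := hk₁.ae_prodMk_left
  have hsec₂ := hk₂.ae_prodMk_right
  refine ⟨?_, hk₁.kernelComp hk₂, eLpNorm_kernelComp_le hk₁.1 hk₂.1, fun f => ?_⟩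
  · filter_upwards [Measure.quasiMeasurePreserving_fst.ae hsec₁,
      Measure.quasiMeasurePreserving_snd.ae hsec₂] with p h₁ h₂
    exact h₁.integrable_mul h₂
  · filter_upwards [hT₂ (T₁ f), hsec₂] with z hz hz₂
    rw [hz, integral_congr_ae ((hT₁ f).mono fun y hy => congrArg (k₂ (y, z) * ·) hy)]
    exact integral_mul_integral_kernel_swap hk₁ (Lp.memLp f) hz₂
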